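/- arXiv:math/9911091 — 2 statements merged into one kernel-verified Lean document; each statement's English description precedes it below -/
import Mathlib

section
/- In the standard setup for a finite-dimensional Hopf algebra H over ℂ with positive basis B: for b, b', c ∈ B, the product b b' is a positive real multiple of c if and only if α₊(b) = α₊(c), β₊(b) = α₊(b'), and α₋(b)·α₋(b') = α₋(c) in the group G₋. Moreover, for fixed c ∈ B, the map (b, b') ↦ α₋(b) is a bijection between the set of pairs (b, b') ∈ B × B with b b' a positive multiple of c and the group G₋. -/
open scoped TensorProduct ComplexOrder

structure IsPositiveBasis {H : Type*} [Ring H] [HopfAlgebra ℂ H] {ι : Type*}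
    (B : Module.Basis ι ℂ H) : Prop where
  one_nonneg : ∀ i, 0 ≤ B.repr 1 i
  counit_nonneg : ∀ i, 0 ≤ Coalgebra.counit (R := ℂ) (B i)
  mul_nonneg : ∀ i j k, 0 ≤ B.repr (B i * B j) k
  comul_nonneg : ∀ i j k,
    0 ≤ (B.tensorProduct B).repr (Coalgebra.comul (R := ℂ) (B i)) (j, k)
  antipode_nonneg : ∀ i j, 0 ≤ B.repr (HopfAlgebra.antipode (R := ℂ) (B i)) j

/-- The first part of the standard setup: a positive basis `B` of `H`, scaled so that
`1 = ∑_{g₊ ∈ G₊} d_{g₊}` with the `d_{g₊} ∈ B` distinct elements indexed by a finite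
group `G₊`, whose span is the Hopf subalgebra `(ℂ G₊)*`. -/
structure SetupPlus (H : Type*) [Ring H] [HopfAlgebra ℂ H] (ι : Type*) [Fintype ι]
    (Gp : Type*) [Group Gp] [Fintype Gp] where
  B : Module.Basis ι ℂ H
  pos : IsPositiveBasis B
  d : Gp → ι
  d_inj : Function.Injective d
  one_eq : (1 : H) = ∑ g : Gp, B (d g)
  d_mul_self : ∀ g : Gp, B (d g) * B (d g) = B (d g)
  d_mul_ne : ∀ g h : Gp, g ≠ h → B (d g) * B (d h) = 0
  d_comul : ∀ g : Gp, Coalgebra.comul (R := ℂ) (B (d g)) =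
    ∑ h : Gp, B (d h) ⊗ₜ[ℂ] B (d (h⁻¹ * g))
  d_antipode : ∀ g : Gp, HopfAlgebra.antipode (R := ℂ) (B (d g)) = B (d g⁻¹)
  d_counit_one : Coalgebra.counit (R := ℂ) (B (d 1)) = 1
  d_counit_ne : ∀ g : Gp, g ≠ 1 → Coalgebra.counit (R := ℂ) (B (d g)) = 0

/-- The full standard setup: in addition the basis is scaled so that
`ε = ∑_{b ∈ G₋} b*`, where `G₋ = {b ∈ B : ε(b) ≠ 0}` is closed under the
multiplication of `H` and forms a group (with identity `d_e`), whose elements are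
`e_{g₋}` for `g₋` in a finite group `G₋`. -/
structure SetupFull (H : Type*) [Ring H] [HopfAlgebra ℂ H] (ι : Type*) [Fintype ι]
    (Gp : Type*) [Group Gp] [Fintype Gp] (Gn : Type*) [Group Gn] [Fintype Gn] extends
    SetupPlus H ι Gp where
  en : Gn → ι
  en_inj : Function.Injective en
  en_range : ∀ i : ι, Coalgebra.counit (R := ℂ) (B i) ≠ 0 ↔ ∃ x : Gn, en x = i
  en_counit : ∀ x : Gn, Coalgebra.counit (R := ℂ) (B (en x)) = 1
  en_mul : ∀ x y : Gn, B (en x) * B (en y) = B (en (x * y))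
  en_one : en 1 = d 1

section
variable {H : Type*} [Ring H] [HopfAlgebra ℂ H] {ι : Type*} [Fintype ι]
  {Gp : Type*} [Group Gp] [Fintype Gp] {Gn : Type*} [Group Gn] [Fintype Gn]

/-- `α₊(b) = g₊`, i.e. `d_{g₊} b = b`. -/
def IsAlphaPlus (S : SetupPlus H ι Gp) (i : ι) (g : Gp) : Prop :=
  S.B (S.d g) * S.B i = S.B i

/-- `β₊(b) = g₊`, i.e. `b d_{g₊} = b`. -/
def IsBetaPlus (S : SetupPlus H ι Gp) (i : ι) (g : Gp) : Prop :=
  S.B i * S.B (S.d g) = S.B i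

/-- `α₋(b) = g₋`: the only term of `Δ(b)` lying in `G₋ ⊗ B` is `e_{g₋} ⊗ b`,
and it has coefficient `1`. -/
def IsAlphaMinus (S : SetupFull H ι Gp Gn) (i : ι) (x : Gn) : Prop :=
  (S.B.tensorProduct S.B).repr (Coalgebra.comul (R := ℂ) (S.B i)) (S.en x, i) = 1 ∧
  ∀ (y : Gn) (j : ι), ¬(y = x ∧ j = i) →
    (S.B.tensorProduct S.B).repr (Coalgebra.comul (R := ℂ) (S.B i)) (S.en y, j) = 0

/-- `β₋(b) = g₋`: the only term of `Δ(b)` lying in `B ⊗ G₋` is `b ⊗ e_{g₋}`,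
and it has coefficient `1`. -/
def IsBetaMinus (S : SetupFull H ι Gp Gn) (i : ι) (x : Gn) : Prop :=
  (S.B.tensorProduct S.B).repr (Coalgebra.comul (R := ℂ) (S.B i)) (i, S.en x) = 1 ∧
  ∀ (y : Gn) (j : ι), ¬(y = x ∧ j = i) →
    (S.B.tensorProduct S.B).repr (Coalgebra.comul (R := ℂ) (S.B i)) (j, S.en y) = 0

end

namespace LYZ
open Coalgebra HopfAlgebra TensorProduct


variable {H : Type*} [Ring H] [HopfAlgebra ℂ H] {ι : Type*} [Fintype ι]
  {Gp : Type*} [Group Gp] [Fintype Gp] {Gn : Type*} [Group Gn] [Fintype Gn]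

/-- structure constants of multiplication -/
noncomputable def Mc (S : SetupFull H ι Gp Gn) (i j k : ι) : ℂ :=
  S.B.repr (S.B i * S.B j) k

/-- structure constants of comultiplication -/
noncomputable def Dc (S : SetupFull H ι Gp Gn) (i j k : ι) : ℂ :=
  (S.B.tensorProduct S.B).repr (Coalgebra.comul (R := ℂ) (S.B i)) (j, k)

/-- structure constants of the antipode -/
noncomputable def Sc (S : SetupFull H ι Gp Gn) (i j : ι) : ℂ :=
  S.B.repr (HopfAlgebra.antipode (R := ℂ) (S.B i)) j

noncomputable def uc (S : SetupFull H ι Gp Gn) (i : ι) : ℂ := S.B.repr 1 i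

noncomputable def ce (S : SetupFull H ι Gp Gn) (i : ι) : ℂ :=
  Coalgebra.counit (R := ℂ) (S.B i)

variable (S : SetupFull H ι Gp Gn)

lemma Mc_nonneg (i j k : ι) : 0 ≤ Mc S i j k := S.pos.mul_nonneg i j k
lemma Dc_nonneg (i j k : ι) : 0 ≤ Dc S i j k := S.pos.comul_nonneg i j k
lemma Sc_nonneg (i j : ι) : 0 ≤ Sc S i j := S.pos.antipode_nonneg i j
lemma uc_nonneg (i : ι) : 0 ≤ uc S i := S.pos.one_nonneg i
lemma ce_nonneg (i : ι) : 0 ≤ ce S i := S.pos.counit_nonneg i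

lemma repr_basis_self (i : ι) : S.B.repr (S.B i) i = 1 := by
  rw [S.B.repr_self]; exact Finsupp.single_eq_same

lemma repr_basis_ne {i j : ι} (h : i ≠ j) : S.B.repr (S.B i) j = 0 := by
  rw [S.B.repr_self]; exact Finsupp.single_eq_of_ne (Ne.symm h)

lemma mul_expand (i j : ι) : S.B i * S.B j = ∑ k, Mc S i j k • S.B k :=
  (S.B.sum_repr _).symm

lemma comul_expand (i : ι) :
    Coalgebra.comul (R := ℂ) (S.B i) = ∑ j, ∑ k, Dc S i j k • (S.B j ⊗ₜ[ℂ] S.B k) := by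
  have h := ((S.B.tensorProduct S.B).sum_repr (Coalgebra.comul (R := ℂ) (S.B i))).symm
  rw [h, Fintype.sum_prod_type]
  exact Finset.sum_congr rfl fun j _ => Finset.sum_congr rfl fun k _ => by
    rw [Module.Basis.tensorProduct_apply]; rfl

lemma antipode_expand (i : ι) :
    HopfAlgebra.antipode (R := ℂ) (S.B i) = ∑ j, Sc S i j • S.B j :=
  (S.B.sum_repr _).symm

lemma uc_d (g : Gp) : uc S (S.d g) = 1 := by
  classical
  rw [uc, S.one_eq, map_sum]
  rw [Finsupp.finset_sum_apply]
  rw [Finset.sum_eq_single g]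
  · exact repr_basis_self S _
  · intro h _ hne
    exact repr_basis_ne S (fun hh => hne (S.d_inj hh))
  · intro h; exact absurd (Finset.mem_univ g) h

lemma uc_eq_zero {i : ι} (h : ∀ g, S.d g ≠ i) : uc S i = 0 := by
  classical
  rw [uc, S.one_eq, map_sum, Finsupp.finset_sum_apply]
  refine Finset.sum_eq_zero fun g _ => ?_
  exact repr_basis_ne S (h g)

lemma ce_en (x : Gn) : ce S (S.en x) = 1 := S.en_counit x

lemma ce_eq_zero {i : ι} (h : ∀ x, S.en x ≠ i) : ce S i = 0 := by
  by_contra hne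
  obtain ⟨x, hx⟩ := (S.en_range i).mp hne
  exact h x hx

lemma ce_ne_zero_iff (i : ι) : ce S i ≠ 0 ↔ ∃ x, S.en x = i := S.en_range i

/-- if `g ≠ α₊ i` then `d_g · b_i = 0` -/
lemma d_mul_of_ne {g g' : Gp} {i : ι} (h : IsAlphaPlus S.toSetupPlus i g')
    (hne : g ≠ g') : S.B (S.d g) * S.B i = 0 := by
  have : S.B (S.d g) * S.B i = (S.B (S.d g) * S.B (S.d g')) * S.B i := by
    rw [mul_assoc, h]
  rw [this, S.d_mul_ne g g' hne, zero_mul]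

lemma mul_d_of_ne {g g' : Gp} {i : ι} (h : IsBetaPlus S.toSetupPlus i g')
    (hne : g' ≠ g) : S.B i * S.B (S.d g) = 0 := by
  have : S.B i * S.B (S.d g) = S.B i * (S.B (S.d g') * S.B (S.d g)) := by
    rw [← mul_assoc, h]
  rw [this, S.d_mul_ne g' g hne, mul_zero]

lemma isAlphaPlus_unique {i : ι} {g g' : Gp} (h : IsAlphaPlus S.toSetupPlus i g)
    (h' : IsAlphaPlus S.toSetupPlus i g') : g = g' := by
  by_contra hne
  have h0 := d_mul_of_ne S h' hne
  rw [h] at h0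
  exact S.B.ne_zero i h0

lemma isBetaPlus_unique {i : ι} {g g' : Gp} (h : IsBetaPlus S.toSetupPlus i g)
    (h' : IsBetaPlus S.toSetupPlus i g') : g = g' := by
  by_contra hne
  have h0 := mul_d_of_ne S h' (Ne.symm hne)
  rw [h] at h0
  exact S.B.ne_zero i h0

lemma isAlphaPlus_d (g : Gp) : IsAlphaPlus S.toSetupPlus (S.d g) g := S.d_mul_self g
lemma isBetaPlus_d (g : Gp) : IsBetaPlus S.toSetupPlus (S.d g) g := S.d_mul_self g

lemma isAlphaPlus_en {x : Gn} {g : Gp} (h : IsAlphaPlus S.toSetupPlus (S.en x) g) :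
    g = 1 := by
  by_contra hne
  have hc := congrArg (Coalgebra.counit (R := ℂ)) h
  rw [Bialgebra.counit_mul] at hc
  have h1 : ce S (S.en x) = 1 := ce_en S x
  rw [ce] at h1
  rw [h1, mul_one] at hc
  have h2 : Coalgebra.counit (R := ℂ) (S.B (S.d g)) = 0 := S.d_counit_ne g hne
  rw [h2] at hc
  exact one_ne_zero hc.symm

lemma isBetaPlus_en {x : Gn} {g : Gp} (h : IsBetaPlus S.toSetupPlus (S.en x) g) :
    g = 1 := by
  by_contra hne
  have hc := congrArg (Coalgebra.counit (R := ℂ)) h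
  rw [Bialgebra.counit_mul] at hc
  have h1 : ce S (S.en x) = 1 := ce_en S x
  rw [ce] at h1
  rw [h1, one_mul] at hc
  have h2 : Coalgebra.counit (R := ℂ) (S.B (S.d g)) = 0 := S.d_counit_ne g hne
  rw [h2] at hc
  exact one_ne_zero hc.symm





/-- coefficient form of the right counit law -/
lemma counit_right (i j : ι) : ∑ k, Dc S i j k * ce S k = S.B.repr (S.B i) j := by
  classical
  have h := Coalgebra.lTensor_counit_comul (R := ℂ) (S.B i)
  rw [comul_expand] at h
  simp only [map_sum, map_smul, LinearMap.lTensor_tmul] at h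
  have h2 := congrArg (TensorProduct.rid ℂ H) h
  simp only [map_sum, map_smul, TensorProduct.rid_tmul] at h2
  have h3 := congrArg (fun v => S.B.repr v j) h2
  simp only [map_sum, map_smul, Finsupp.coe_finset_sum, Finset.sum_apply,
    Finsupp.smul_apply, smul_eq_mul] at h3
  rw [one_mul] at h3
  rw [← h3, Finset.sum_comm]
  refine Finset.sum_congr rfl fun k _ => ?_
  rw [Finset.sum_eq_single j]
  · rw [repr_basis_self, mul_one]; rfl
  · intro p _ hp; rw [repr_basis_ne S hp, mul_zero, mul_zero]
  · simp



/-- coefficient form of the left counit law -/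
lemma counit_left (i k : ι) : ∑ j, Dc S i j k * ce S j = S.B.repr (S.B i) k := by
  classical
  have h := Coalgebra.rTensor_counit_comul (R := ℂ) (S.B i)
  rw [comul_expand] at h
  simp only [map_sum, map_smul, LinearMap.rTensor_tmul] at h
  have h2 := congrArg (TensorProduct.lid ℂ H) h
  simp only [map_sum, map_smul, TensorProduct.lid_tmul] at h2
  have h3 := congrArg (fun v => S.B.repr v k) h2
  simp only [map_sum, map_smul, Finsupp.coe_finset_sum, Finset.sum_apply,
    Finsupp.smul_apply, smul_eq_mul, one_smul] at h3
  rw [← h3]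
  refine Finset.sum_congr rfl fun j _ => ?_
  rw [Finset.sum_eq_single k]
  · rw [repr_basis_self, mul_one]; rfl
  · intro p _ hp; rw [repr_basis_ne S hp, mul_zero, mul_zero]
  · simp

/-- terms of `Δ b` whose second slot lies in `G₋` have first slot `b` -/
lemma Dc_en_second {i j : ι} (hne : j ≠ i) (y : Gn) : Dc S i j (S.en y) = 0 := by
  have h := counit_right S i j
  rw [repr_basis_ne S (Ne.symm hne)] at h
  have hz := (Finset.sum_eq_zero_iff_of_nonneg (fun k _ =>
    mul_nonneg (Dc_nonneg S i j k) (ce_nonneg S k))).mp h (S.en y) (Finset.mem_univ _)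
  rw [ce_en, mul_one] at hz
  exact hz

lemma sum_Dc_diag (i : ι) : ∑ y, Dc S i i (S.en y) = 1 := by
  classical
  have h := counit_right S i i
  rw [repr_basis_self] at h
  have h4 : ∑ k, Dc S i i k * ce S k
      = ∑ k ∈ Finset.univ.image S.en, Dc S i i k * ce S k := by
    refine (Finset.sum_subset (Finset.subset_univ _) ?_).symm
    intro k _ hk
    simp only [Finset.mem_image, Finset.mem_univ, true_and] at hk
    rw [ce_eq_zero S (fun x hx => hk ⟨x, hx⟩), mul_zero]
  rw [h4, Finset.sum_image (fun x _ y _ hxy => S.en_inj hxy)] at h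
  rw [← h]
  refine Finset.sum_congr rfl fun y _ => ?_
  rw [ce_en, mul_one]

lemma isAlphaMinus_unique {i : ι} {x x' : Gn} (h : IsAlphaMinus S i x)
    (h' : IsAlphaMinus S i x') : x = x' := by
  by_contra hne
  have h0 := h'.2 x i (fun hc => hne hc.1)
  have h1 : Dc S i (S.en x) i = 1 := h.1
  rw [show ((S.B.tensorProduct S.B).repr (Coalgebra.comul (R := ℂ) (S.B i)) (S.en x, i))
    = Dc S i (S.en x) i from rfl] at h0
  rw [h0] at h1
  exact zero_ne_one h1

lemma isAlphaMinus_en {x y : Gn} (h : IsAlphaMinus S (S.en y) x) : x = y := by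
  have h1 : Dc S (S.en y) (S.en x) (S.en y) = 1 := h.1
  by_contra hne
  have hnee : S.en x ≠ S.en y := fun hc => hne (S.en_inj hc)
  rw [Dc_en_second S hnee y] at h1
  exact zero_ne_one h1

lemma Dc_d_dd (a b : Gp) : Dc S (S.d (a * b)) (S.d a) (S.d b) = 1 := by
  classical
  rw [Dc, S.d_comul, map_sum, Finsupp.finset_sum_apply]
  rw [Finset.sum_eq_single a]
  · rw [Module.Basis.tensorProduct_repr_tmul_apply, smul_eq_mul]
    rw [show a⁻¹ * (a * b) = b by group]
    rw [repr_basis_self, repr_basis_self, mul_one]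
  · intro h _ hne
    rw [Module.Basis.tensorProduct_repr_tmul_apply, smul_eq_mul,
      repr_basis_ne S (fun hc => hne (S.d_inj hc)), mul_zero]
  · simp

lemma Dc_d_ne_zero {g : Gp} {j k : ι} (h : Dc S (S.d g) j k ≠ 0) :
    ∃ a, S.d a = j ∧ S.d (a⁻¹ * g) = k := by
  classical
  rw [Dc, S.d_comul, map_sum, Finsupp.finset_sum_apply] at h
  obtain ⟨a, _, ha⟩ := Finset.exists_ne_zero_of_sum_ne_zero h
  rw [Module.Basis.tensorProduct_repr_tmul_apply, smul_eq_mul] at ha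
  refine ⟨a, ?_, ?_⟩
  · by_contra hc
    rw [repr_basis_ne S hc, mul_zero] at ha; exact ha rfl
  · by_contra hc
    rw [repr_basis_ne S hc, zero_mul] at ha; exact ha rfl

lemma isAlphaMinus_d (g : Gp) : IsAlphaMinus S (S.d g) 1 := by
  constructor
  · show Dc S (S.d g) (S.en 1) (S.d g) = 1
    rw [S.en_one]
    have := Dc_d_dd S 1 g
    rwa [one_mul] at this
  · intro y j hyj
    show Dc S (S.d g) (S.en y) j = 0
    by_contra hne
    obtain ⟨a, ha1, ha2⟩ := Dc_d_ne_zero S hne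
    have ha : a = 1 := by
      by_contra hc
      have h0 : ce S (S.d a) = 0 := S.d_counit_ne a hc
      rw [ha1, ce_en] at h0
      exact one_ne_zero h0
    subst ha
    rw [← S.en_one] at ha1
    apply hyj
    constructor
    · exact (S.en_inj ha1.symm)
    · rw [← ha2]; congr 1; group





lemma repr_basis' [DecidableEq ι] (i j : ι) : S.B.repr (S.B i) j = if i = j then 1 else 0 := by
  rw [S.B.repr_self]; exact Finsupp.single_apply

set_option maxHeartbeats 1000000 in
set_option synthInstance.maxHeartbeats 400000 in
/-- coefficient form of coassociativity -/
lemma coassoc_coeff (i p q k : ι) :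
    ∑ w, Dc S i w k * Dc S w p q = ∑ w, Dc S i p w * Dc S w q k := by
  classical
  have h := Coalgebra.coassoc_apply (R := ℂ) (S.B i)
  simp only [comul_expand S, map_sum, map_smul, LinearMap.rTensor_tmul, LinearMap.lTensor_tmul,
    TensorProduct.sum_tmul, TensorProduct.tmul_sum, TensorProduct.smul_tmul,
    TensorProduct.tmul_smul, TensorProduct.assoc_tmul] at h
  have h2 := congrArg (fun v =>
    (S.B.tensorProduct (S.B.tensorProduct S.B)).repr v (p, (q, k))) h
  simp only [map_sum, map_smul, Finsupp.coe_finset_sum, Finset.sum_apply,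
    Finsupp.smul_apply, smul_eq_mul, Module.Basis.tensorProduct_repr_tmul_apply,
    repr_basis' S, mul_ite, ite_mul, one_mul, mul_one, zero_mul, mul_zero,
    Finset.sum_ite_eq, Finset.sum_ite_eq', Finset.mem_univ, if_true] at h2
  simp at h2
  exact h2





lemma Dc_aM_self {aM : ι → Gn} (haM : ∀ i, IsAlphaMinus S i (aM i)) (i : ι) :
    Dc S i (S.en (aM i)) i = 1 := (haM i).1

lemma Dc_aM_zero {aM : ι → Gn} (haM : ∀ i, IsAlphaMinus S i (aM i)) (i : ι)
    {y : Gn} {j : ι} (h : ¬(y = aM i ∧ j = i)) : Dc S i (S.en y) j = 0 :=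
  (haM i).2 y j h

/-- the `α₋` value of a first slot of `Δ b` agrees with `α₋ b` -/
lemma aM_first_slot {aM : ι → Gn} (haM : ∀ i, IsAlphaMinus S i (aM i))
    {i p q : ι} (h : Dc S i p q ≠ 0) : aM p = aM i := by
  classical
  have hc := coassoc_coeff S i (S.en (aM p)) p q
  have hL : ∑ w, Dc S i w q * Dc S w (S.en (aM p)) p = Dc S i p q := by
    rw [Finset.sum_eq_single p]
    · rw [Dc_aM_self S haM p, mul_one]
    · intro w _ hw
      rw [Dc_aM_zero S haM w (fun hx => hw hx.2.symm), mul_zero]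
    · simp
  by_contra hne
  have hR : ∑ w, Dc S i (S.en (aM p)) w * Dc S w p q = 0 := by
    refine Finset.sum_eq_zero fun w _ => ?_
    rw [Dc_aM_zero S haM i (fun hx => hne hx.1), zero_mul]
  rw [hL, hR] at hc
  exact h hc





set_option maxHeartbeats 1000000 in
set_option synthInstance.maxHeartbeats 400000 in
/-- coefficient form of multiplicativity of the comultiplication -/
lemma mul_comul_coeff (i j p q : ι) :
    ∑ t, Mc S i j t * Dc S t p q
      = ∑ p₂, ∑ q₂, Dc S j p₂ q₂ *
          ∑ p₁, ∑ q₁, Dc S i p₁ q₁ * (Mc S q₁ q₂ q * Mc S p₁ p₂ p) := by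
  classical
  have h : Coalgebra.comul (R := ℂ) (S.B i * S.B j)
      = Coalgebra.comul (R := ℂ) (S.B i) * Coalgebra.comul (R := ℂ) (S.B j) :=
    Bialgebra.comul_mul _ _
  rw [mul_expand S i j, map_sum, comul_expand S i, comul_expand S j] at h
  simp only [map_smul, Finset.sum_mul, Finset.mul_sum, smul_mul_assoc, mul_smul_comm,
    Algebra.TensorProduct.tmul_mul_tmul] at h
  have h2 := congrArg (fun v => (S.B.tensorProduct S.B).repr v (p, q)) h
  simp only [map_sum, map_smul, Finsupp.coe_finset_sum, Finset.sum_apply,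
    Finsupp.smul_apply, smul_eq_mul, Module.Basis.tensorProduct_repr_tmul_apply] at h2
  exact h2





lemma Mc_en_en (x y : Gn) : Mc S (S.en x) (S.en y) (S.en (x * y)) = 1 := by
  rw [Mc, S.en_mul, repr_basis_self]

lemma Mc_en_en_ne (x y : Gn) {k : ι} (h : S.en (x * y) ≠ k) :
    Mc S (S.en x) (S.en y) k = 0 := by
  rw [Mc, S.en_mul, repr_basis_ne S h]

/-- `α₋` is multiplicative on products of basis elements -/
lemma aM_mul {aM : ι → Gn} (haM : ∀ i, IsAlphaMinus S i (aM i)) {i j k : ι}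
    (h : Mc S i j k ≠ 0) : aM i * aM j = aM k := by
  classical
  by_contra hne
  have hc := mul_comul_coeff S i j (S.en (aM i * aM j)) k
  have hL : ∑ t, Mc S i j t * Dc S t (S.en (aM i * aM j)) k = 0 := by
    refine Finset.sum_eq_zero fun t _ => ?_
    have hDz : Dc S t (S.en (aM i * aM j)) k = 0 := by
      apply Dc_aM_zero S haM t
      rintro ⟨hx1, hx2⟩
      subst hx2
      exact hne hx1
    rw [hDz, mul_zero]
  set z := aM i * aM j with hz
  have hMc : 0 < Mc S i j k := lt_of_le_of_ne (Mc_nonneg S i j k) (Ne.symm h)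
  -- inner estimate
  have t0 : Mc S i j k
      = Dc S i (S.en (aM i)) i * (Mc S i j k * Mc S (S.en (aM i)) (S.en (aM j)) (S.en z)) := by
    rw [Dc_aM_self S haM i, Mc_en_en, mul_one, one_mul]
  have t1 : Mc S i j k ≤ ∑ q₁, Dc S i (S.en (aM i)) q₁ *
      (Mc S q₁ j k * Mc S (S.en (aM i)) (S.en (aM j)) (S.en z)) := by
    rw [t0]
    exact Finset.single_le_sum (f := fun q₁ => Dc S i (S.en (aM i)) q₁ *
      (Mc S q₁ j k * Mc S (S.en (aM i)) (S.en (aM j)) (S.en z)))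
      (fun q₁ _ => mul_nonneg (Dc_nonneg S _ _ _)
        (mul_nonneg (Mc_nonneg S _ _ _) (Mc_nonneg S _ _ _))) (Finset.mem_univ i)
  have t2 : (∑ q₁, Dc S i (S.en (aM i)) q₁ *
      (Mc S q₁ j k * Mc S (S.en (aM i)) (S.en (aM j)) (S.en z)))
      ≤ ∑ p₁, ∑ q₁, Dc S i p₁ q₁ * (Mc S q₁ j k * Mc S p₁ (S.en (aM j)) (S.en z)) := by
    exact Finset.single_le_sum (f := fun p₁ => ∑ q₁, Dc S i p₁ q₁ *
      (Mc S q₁ j k * Mc S p₁ (S.en (aM j)) (S.en z)))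
      (fun p₁ _ => Finset.sum_nonneg fun q₁ _ => mul_nonneg (Dc_nonneg S _ _ _)
        (mul_nonneg (Mc_nonneg S _ _ _) (Mc_nonneg S _ _ _))) (Finset.mem_univ (S.en (aM i)))
  have t3 : (∑ p₁, ∑ q₁, Dc S i p₁ q₁ * (Mc S q₁ j k * Mc S p₁ (S.en (aM j)) (S.en z)))
      = Dc S j (S.en (aM j)) j *
        ∑ p₁, ∑ q₁, Dc S i p₁ q₁ * (Mc S q₁ j k * Mc S p₁ (S.en (aM j)) (S.en z)) := by
    rw [Dc_aM_self S haM j, one_mul]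
  have t4 : Dc S j (S.en (aM j)) j *
        (∑ p₁, ∑ q₁, Dc S i p₁ q₁ * (Mc S q₁ j k * Mc S p₁ (S.en (aM j)) (S.en z)))
      ≤ ∑ q₂, Dc S j (S.en (aM j)) q₂ *
        ∑ p₁, ∑ q₁, Dc S i p₁ q₁ * (Mc S q₁ q₂ k * Mc S p₁ (S.en (aM j)) (S.en z)) := by
    exact Finset.single_le_sum (f := fun q₂ => Dc S j (S.en (aM j)) q₂ *
      ∑ p₁, ∑ q₁, Dc S i p₁ q₁ * (Mc S q₁ q₂ k * Mc S p₁ (S.en (aM j)) (S.en z)))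
      (fun q₂ _ => mul_nonneg (Dc_nonneg S _ _ _) (Finset.sum_nonneg fun p₁ _ =>
        Finset.sum_nonneg fun q₁ _ => mul_nonneg (Dc_nonneg S _ _ _)
          (mul_nonneg (Mc_nonneg S _ _ _) (Mc_nonneg S _ _ _)))) (Finset.mem_univ j)
  have t5 : (∑ q₂, Dc S j (S.en (aM j)) q₂ *
        ∑ p₁, ∑ q₁, Dc S i p₁ q₁ * (Mc S q₁ q₂ k * Mc S p₁ (S.en (aM j)) (S.en z)))
      ≤ ∑ p₂, ∑ q₂, Dc S j p₂ q₂ *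
        ∑ p₁, ∑ q₁, Dc S i p₁ q₁ * (Mc S q₁ q₂ k * Mc S p₁ p₂ (S.en z)) := by
    exact Finset.single_le_sum (f := fun p₂ => ∑ q₂, Dc S j p₂ q₂ *
      ∑ p₁, ∑ q₁, Dc S i p₁ q₁ * (Mc S q₁ q₂ k * Mc S p₁ p₂ (S.en z)))
      (fun p₂ _ => Finset.sum_nonneg fun q₂ _ => mul_nonneg (Dc_nonneg S _ _ _)
        (Finset.sum_nonneg fun p₁ _ => Finset.sum_nonneg fun q₁ _ =>
          mul_nonneg (Dc_nonneg S _ _ _)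
            (mul_nonneg (Mc_nonneg S _ _ _) (Mc_nonneg S _ _ _))))
      (Finset.mem_univ (S.en (aM j)))
  have : Mc S i j k ≤ 0 := by
    calc Mc S i j k ≤ ∑ q₁, Dc S i (S.en (aM i)) q₁ *
        (Mc S q₁ j k * Mc S (S.en (aM i)) (S.en (aM j)) (S.en z)) := t1
    _ ≤ ∑ p₁, ∑ q₁, Dc S i p₁ q₁ * (Mc S q₁ j k * Mc S p₁ (S.en (aM j)) (S.en z)) := t2
    _ = Dc S j (S.en (aM j)) j * _ := t3
    _ ≤ ∑ q₂, Dc S j (S.en (aM j)) q₂ *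
        ∑ p₁, ∑ q₁, Dc S i p₁ q₁ * (Mc S q₁ q₂ k * Mc S p₁ (S.en (aM j)) (S.en z)) := t4
    _ ≤ ∑ p₂, ∑ q₂, Dc S j p₂ q₂ *
        ∑ p₁, ∑ q₁, Dc S i p₁ q₁ * (Mc S q₁ q₂ k * Mc S p₁ p₂ (S.en z)) := t5
    _ = ∑ t, Mc S i j t * Dc S t (S.en z) k := hc.symm
    _ = 0 := hL
  exact lt_irrefl (0 : ℂ) (lt_of_lt_of_le hMc this)





set_option maxHeartbeats 1000000 in
/-- coefficient form of the left antipode axiom -/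
lemma hopf_left_coeff (i s : ι) :
    ∑ p, ∑ q, Dc S i p q * ∑ r, Sc S p r * Mc S r q s = ce S i * uc S s := by
  classical
  have h := HopfAlgebra.mul_antipode_rTensor_comul_apply (R := ℂ) (S.B i)
  rw [comul_expand] at h
  simp only [map_sum, map_smul, LinearMap.rTensor_tmul, LinearMap.mul'_apply] at h
  simp only [antipode_expand S, Finset.sum_mul, smul_mul_assoc] at h
  have h2 := congrArg (fun v => S.B.repr v s) h
  simp only [map_sum, map_smul, Finsupp.coe_finset_sum, Finset.sum_apply,
    Finsupp.smul_apply, smul_eq_mul, Algebra.algebraMap_eq_smul_one] at h2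
  exact h2

set_option maxHeartbeats 1000000 in
/-- coefficient form of the right antipode axiom -/
lemma hopf_right_coeff (i s : ι) :
    ∑ p, ∑ q, Dc S i p q * ∑ r, Sc S q r * Mc S p r s = ce S i * uc S s := by
  classical
  have h := HopfAlgebra.mul_antipode_lTensor_comul_apply (R := ℂ) (S.B i)
  rw [comul_expand] at h
  simp only [map_sum, map_smul, LinearMap.lTensor_tmul, LinearMap.mul'_apply] at h
  simp only [antipode_expand S, Finset.mul_sum, mul_smul_comm] at h
  have h2 := congrArg (fun v => S.B.repr v s) h
  simp only [map_sum, map_smul, Finsupp.coe_finset_sum, Finset.sum_apply,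
    Finsupp.smul_apply, smul_eq_mul, Algebra.algebraMap_eq_smul_one] at h2
  exact h2





lemma Sc_d_self (g : Gp) : Sc S (S.d g) (S.d g⁻¹) = 1 := by
  rw [Sc, S.d_antipode, repr_basis_self]

lemma Mc_d_d_d (g : Gp) : Mc S (S.d g) (S.d g) (S.d g) = 1 := by
  rw [Mc, S.d_mul_self, repr_basis_self]

lemma Mc_aP_self {aP : ι → Gp} (haP : ∀ i, IsAlphaPlus S.toSetupPlus i (aP i)) (i : ι) :
    Mc S (S.d (aP i)) i i = 1 := by
  rw [Mc, haP i, repr_basis_self]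

lemma aM_d_eq {aM : ι → Gn} (haM : ∀ i, IsAlphaMinus S i (aM i)) (g : Gp) :
    aM (S.d g) = 1 := isAlphaMinus_unique S (haM (S.d g)) (isAlphaMinus_d S g)

lemma aM_en_eq {aM : ι → Gn} (haM : ∀ i, IsAlphaMinus S i (aM i)) (y : Gn) :
    aM (S.en y) = y := isAlphaMinus_en S (haM (S.en y))

/-- if `d_g ⊗ d_{g⁻¹}` occurs in `Δ c` then `c = d_1` -/
lemma Dc_d_dinv {aM : ι → Gn} (haM : ∀ i, IsAlphaMinus S i (aM i)) {g : Gp} {c : ι}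
    (h : Dc S c (S.d g) (S.d g⁻¹) ≠ 0) : c = S.d 1 := by
  classical
  have hpos : 0 < Dc S c (S.d g) (S.d g⁻¹) :=
    lt_of_le_of_ne (Dc_nonneg S _ _ _) (Ne.symm h)
  have hinner : (1 : ℂ) ≤ ∑ r, Sc S (S.d g) r * Mc S r (S.d g⁻¹) (S.d g⁻¹) := by
    have hle := Finset.single_le_sum
      (f := fun r => Sc S (S.d g) r * Mc S r (S.d g⁻¹) (S.d g⁻¹))
      (fun r _ => mul_nonneg (Sc_nonneg S _ _) (Mc_nonneg S _ _ _))
      (Finset.mem_univ (S.d g⁻¹))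
    simpa only [Sc_d_self, Mc_d_d_d, mul_one] using hle
  have h1 : Dc S c (S.d g) (S.d g⁻¹)
      ≤ Dc S c (S.d g) (S.d g⁻¹) * ∑ r, Sc S (S.d g) r * Mc S r (S.d g⁻¹) (S.d g⁻¹) :=
    le_mul_of_one_le_right (Dc_nonneg S _ _ _) hinner
  have h2 : Dc S c (S.d g) (S.d g⁻¹) * (∑ r, Sc S (S.d g) r * Mc S r (S.d g⁻¹) (S.d g⁻¹))
      ≤ ∑ q, Dc S c (S.d g) q * ∑ r, Sc S (S.d g) r * Mc S r q (S.d g⁻¹) :=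
    Finset.single_le_sum
      (f := fun q => Dc S c (S.d g) q * ∑ r, Sc S (S.d g) r * Mc S r q (S.d g⁻¹))
      (fun q _ => mul_nonneg (Dc_nonneg S _ _ _) (Finset.sum_nonneg fun r _ =>
        mul_nonneg (Sc_nonneg S _ _) (Mc_nonneg S _ _ _)))
      (Finset.mem_univ (S.d g⁻¹))
  have h3 : (∑ q, Dc S c (S.d g) q * ∑ r, Sc S (S.d g) r * Mc S r q (S.d g⁻¹))
      ≤ ∑ p, ∑ q, Dc S c p q * ∑ r, Sc S p r * Mc S r q (S.d g⁻¹) :=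
    Finset.single_le_sum
      (f := fun p => ∑ q, Dc S c p q * ∑ r, Sc S p r * Mc S r q (S.d g⁻¹))
      (fun p _ => Finset.sum_nonneg fun q _ => mul_nonneg (Dc_nonneg S _ _ _)
        (Finset.sum_nonneg fun r _ => mul_nonneg (Sc_nonneg S _ _) (Mc_nonneg S _ _ _)))
      (Finset.mem_univ (S.d g))
  have hce : 0 < ce S c := by
    have := lt_of_lt_of_le hpos (le_trans h1 (le_trans h2 h3))
    rwa [hopf_left_coeff S c (S.d g⁻¹), uc_d, mul_one] at this
  obtain ⟨y, hy⟩ := (ce_ne_zero_iff S c).mp (ne_of_gt hce)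
  subst hy
  have h4 : aM (S.d g) = aM (S.en y) := aM_first_slot S haM h
  rw [aM_d_eq S haM, aM_en_eq S haM] at h4
  rw [← h4, S.en_one]

/-- CLAIM D : a basis element with `α₋ = 1` is one of the `d`'s -/
lemma claimD {aP : ι → Gp} {aM : ι → Gn} (haP : ∀ i, IsAlphaPlus S.toSetupPlus i (aP i))
    (haM : ∀ i, IsAlphaMinus S i (aM i)) {i : ι} (h : aM i = 1) : S.d (aP i) = i := by
  classical
  by_cases hd : ∃ g, S.d g = i
  · obtain ⟨g, rfl⟩ := hd
    rw [isAlphaPlus_unique S (haP (S.d g)) (isAlphaPlus_d S g)]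
  · push_neg at hd
    exfalso
    -- every occurrence of `d_{(aP i)⁻¹} ⊗ b_i` in any `Δ c` vanishes
    have h3 : ∀ s, Dc S s (S.d (aP i)⁻¹) i = 0 := by
      intro s
      have hid := hopf_left_coeff S s i
      rw [uc_eq_zero S hd, mul_zero] at hid
      have houter := (Finset.sum_eq_zero_iff_of_nonneg (fun p _ =>
        Finset.sum_nonneg fun q _ => mul_nonneg (Dc_nonneg S _ _ _)
          (Finset.sum_nonneg fun r _ => mul_nonneg (Sc_nonneg S _ _)
            (Mc_nonneg S _ _ _)))).mp hid (S.d (aP i)⁻¹) (Finset.mem_univ _)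
      have hinner0 := (Finset.sum_eq_zero_iff_of_nonneg (fun q _ =>
        mul_nonneg (Dc_nonneg S _ _ _) (Finset.sum_nonneg fun r _ =>
          mul_nonneg (Sc_nonneg S _ _) (Mc_nonneg S _ _ _)))).mp houter i
        (Finset.mem_univ _)
      -- the inner sum is at least 1
      have hinner : (1 : ℂ) ≤ ∑ r, Sc S (S.d (aP i)⁻¹) r * Mc S r i i := by
        have hle := Finset.single_le_sum
          (f := fun r => Sc S (S.d (aP i)⁻¹) r * Mc S r i i)
          (fun r _ => mul_nonneg (Sc_nonneg S _ _) (Mc_nonneg S _ _ _))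
          (Finset.mem_univ (S.d (aP i)))
        have hsc : Sc S (S.d (aP i)⁻¹) (S.d (aP i)) = 1 := by
          have := Sc_d_self S (aP i)⁻¹
          rwa [inv_inv] at this
        simpa only [hsc, Mc_aP_self S haP, mul_one] using hle
      rcases mul_eq_zero.mp hinner0 with h0 | h0
      · exact h0
      · exfalso
        rw [h0] at hinner
        exact lt_irrefl (0 : ℂ) (lt_of_lt_of_le zero_lt_one hinner)
    -- coassociativity contradiction
    have hcoass := coassoc_coeff S i (S.d (aP i)) (S.d (aP i)⁻¹) i
    have hR : ∑ w, Dc S i (S.d (aP i)) w * Dc S w (S.d (aP i)⁻¹) i = 0 :=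
      Finset.sum_eq_zero fun w _ => by rw [h3 w, mul_zero]
    have hL : ∑ w, Dc S i w i * Dc S w (S.d (aP i)) (S.d (aP i)⁻¹) = 1 := by
      rw [Finset.sum_eq_single (S.d 1)]
      · have hdd : Dc S (S.d 1) (S.d (aP i)) (S.d (aP i)⁻¹) = 1 := by
          have := Dc_d_dd S (aP i) (aP i)⁻¹
          rwa [mul_inv_cancel] at this
        have hdi : Dc S i (S.d 1) i = 1 := by
          have := Dc_aM_self S haM i
          rwa [h, S.en_one] at this
        rw [hdd, hdi, mul_one]
      · intro w _ hw
        rcases eq_or_ne (Dc S w (S.d (aP i)) (S.d (aP i)⁻¹)) 0 with h0 | h0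
        · rw [h0, mul_zero]
        · exact absurd (Dc_d_dinv S haM h0) hw
      · simp
    rw [hL, hR] at hcoass
    exact one_ne_zero hcoass





/-- products vanish when the middle `d`-idempotents don't match -/
lemma mul_eq_zero_of_ne {aP bP : ι → Gp} (haP : ∀ i, IsAlphaPlus S.toSetupPlus i (aP i))
    (hbP : ∀ i, IsBetaPlus S.toSetupPlus i (bP i)) {i j : ι} (h : bP i ≠ aP j) :
    S.B i * S.B j = 0 := by
  have h1 : S.B i * S.B j = S.B i * (S.B (S.d (bP i)) * S.B j) := by
    rw [← mul_assoc, hbP i]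
  rw [h1, d_mul_of_ne S (haP j) h, mul_zero]

/-- `α₊` of any element in the support of a product is `α₊` of the left factor -/
lemma aP_mul_left {aP : ι → Gp} (haP : ∀ i, IsAlphaPlus S.toSetupPlus i (aP i))
    {i j k : ι} (h : Mc S i j k ≠ 0) : aP k = aP i := by
  classical
  by_contra hne
  apply h
  have h1 : (S.B i * S.B j) = S.B (S.d (aP i)) * (S.B i * S.B j) := by
    rw [← mul_assoc, haP i]
  have h2 : S.B.repr (S.B i * S.B j) k
      = ∑ t, Mc S i j t * S.B.repr (S.B (S.d (aP i)) * S.B t) k := by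
    conv_lhs => rw [h1, mul_expand S i j]
    rw [Finset.mul_sum]
    simp only [mul_smul_comm, map_sum, Finsupp.coe_finset_sum, Finset.sum_apply,
      map_smul, Finsupp.smul_apply, smul_eq_mul]
  have hL : ∑ t, Mc S i j t * S.B.repr (S.B (S.d (aP i)) * S.B t) k = 0 := by
    refine Finset.sum_eq_zero fun t _ => ?_
    rcases eq_or_ne (aP t) (aP i) with hti | hti
    · have he : S.B (S.d (aP i)) * S.B t = S.B t := by rw [← hti]; exact haP t
      rw [he]
      rcases eq_or_ne t k with rfl | htk
      · exact absurd hti hne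
      · rw [repr_basis_ne S htk, mul_zero]
    · rw [d_mul_of_ne S (haP t) (Ne.symm hti)]
      simp
  show S.B.repr (S.B i * S.B j) k = 0
  rw [h2, hL]

lemma aP_d_eq {aP : ι → Gp} (haP : ∀ i, IsAlphaPlus S.toSetupPlus i (aP i)) (g : Gp) :
    aP (S.d g) = g := isAlphaPlus_unique S (haP (S.d g)) (isAlphaPlus_d S g)





/-- existence of representatives with a right quasi-inverse, for every `(h, x)` -/
lemma rep_exists {aP : ι → Gp} {aM : ι → Gn}
    (haP : ∀ i, IsAlphaPlus S.toSetupPlus i (aP i))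
    (haM : ∀ i, IsAlphaMinus S i (aM i)) (h : Gp) (x : Gn) :
    ∃ p r, aP p = h ∧ aM p = x ∧ Mc S p r (S.d h) ≠ 0 := by
  classical
  have hid := hopf_right_coeff S (S.en x) (S.d h)
  rw [ce_en, uc_d, one_mul] at hid
  have hne : (∑ p, ∑ q, Dc S (S.en x) p q * ∑ r, Sc S q r * Mc S p r (S.d h)) ≠ 0 :=
    ne_of_eq_of_ne hid one_ne_zero
  obtain ⟨p, _, hp⟩ := Finset.exists_ne_zero_of_sum_ne_zero hne
  obtain ⟨q, _, hq⟩ := Finset.exists_ne_zero_of_sum_ne_zero hp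
  rcases mul_ne_zero_iff.mp hq with ⟨hDc, hin⟩
  obtain ⟨r, _, hr⟩ := Finset.exists_ne_zero_of_sum_ne_zero hin
  rcases mul_ne_zero_iff.mp hr with ⟨_, hMc⟩
  refine ⟨p, r, ?_, ?_, hMc⟩
  · rw [← aP_mul_left S haP hMc, aP_d_eq S haP]
  · rw [aM_first_slot S haM hDc, aM_en_eq S haM]

/-- a representative's product with its quasi-inverse is a positive multiple of a `d` -/
lemma rep_product {aP : ι → Gp} {aM : ι → Gn}
    (haP : ∀ i, IsAlphaPlus S.toSetupPlus i (aP i))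
    (haM : ∀ i, IsAlphaMinus S i (aM i)) {p r : ι} {h : Gp}
    (hp : aP p = h) (hMc : Mc S p r (S.d h) ≠ 0) :
    S.B p * S.B r = Mc S p r (S.d h) • S.B (S.d h) := by
  classical
  have haMr : aM p * aM r = 1 := by
    have := aM_mul S haM hMc
    rwa [aM_d_eq S haM] at this
  have hsupp : ∀ k, Mc S p r k ≠ 0 → k = S.d h := by
    intro k hk
    have h1 : aM p * aM r = aM k := aM_mul S haM hk
    have h2 : aM k = 1 := by rw [← h1, haMr]
    have h3 := claimD S haP haM h2
    rw [aP_mul_left S haP hk, hp] at h3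
    exact h3.symm
  rw [mul_expand S p r]
  rw [Finset.sum_eq_single (S.d h)]
  · intro k _ hk
    rcases eq_or_ne (Mc S p r k) 0 with h0 | h0
    · rw [h0, zero_smul]
    · exact absurd (hsupp k h0) hk
  · simp

/-- any basis element with the invariants of a representative equals it -/
lemma eq_of_rep {aP bP : ι → Gp} {aM : ι → Gn}
    (haP : ∀ i, IsAlphaPlus S.toSetupPlus i (aP i))
    (hbP : ∀ i, IsBetaPlus S.toSetupPlus i (bP i))
    (haM : ∀ i, IsAlphaMinus S i (aM i)) {b p r : ι}
    (hxp : aM p = aM b)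
    (hMc : Mc S p r (S.d (aP b)) ≠ 0)
    (hprod : S.B p * S.B r = Mc S p r (S.d (aP b)) • S.B (S.d (aP b))) : b = p := by
  classical
  -- the product `B r * B b` is supported on `d (aP r)`
  have haMr : aM p * aM r = 1 := by
    have := aM_mul S haM hMc
    rwa [aM_d_eq S haM] at this
  have hrb : S.B r * S.B b = Mc S r b (S.d (aP r)) • S.B (S.d (aP r)) := by
    have hsupp : ∀ k, Mc S r b k ≠ 0 → k = S.d (aP r) := by
      intro k hk
      have h1 : aM r * aM b = aM k := aM_mul S haM hk
      have hinv : aM r = (aM p)⁻¹ := eq_inv_of_mul_eq_one_right haMr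
      have h2 : aM k = 1 := by
        rw [← h1, hinv, ← hxp, inv_mul_cancel]
      have h3 := claimD S haP haM h2
      rw [aP_mul_left S haP hk] at h3
      exact h3.symm
    rw [mul_expand S r b]
    rw [Finset.sum_eq_single (S.d (aP r))]
    · intro k _ hk
      rcases eq_or_ne (Mc S r b k) 0 with h0 | h0
      · rw [h0, zero_smul]
      · exact absurd (hsupp k h0) hk
    · simp
  -- associativity
  have hassoc : Mc S p r (S.d (aP b)) • S.B b
      = Mc S r b (S.d (aP r)) • (S.B p * S.B (S.d (aP r))) := by
    have h1 : (S.B p * S.B r) * S.B b = Mc S p r (S.d (aP b)) • S.B b := by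
      rw [hprod, smul_mul_assoc, haP b]
    have h2 : S.B p * (S.B r * S.B b)
        = Mc S r b (S.d (aP r)) • (S.B p * S.B (S.d (aP r))) := by
      rw [hrb, mul_smul_comm]
    rw [← h1, mul_assoc, h2]
  -- the right factor cannot vanish
  rcases eq_or_ne (aP r) (bP p) with hbp | hbp
  · have h4 : S.B p * S.B (S.d (aP r)) = S.B p := by rw [hbp]; exact hbP p
    rw [h4] at hassoc
    have h5 := congrArg (fun v => S.B.repr v b) hassoc
    simp only [map_smul, Finsupp.smul_apply, smul_eq_mul, repr_basis_self, mul_one] at h5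
    by_contra hbp2
    rw [repr_basis_ne S (Ne.symm hbp2), mul_zero] at h5
    exact hMc h5
  · exfalso
    rw [mul_d_of_ne S (hbP p) (Ne.symm hbp), smul_zero] at hassoc
    have := smul_eq_zero.mp hassoc
    rcases this with h0 | h0
    · exact hMc h0
    · exact S.B.ne_zero b h0





/-- a basis element is determined by `(α₊, α₋)` -/
lemma elem_unique {aP bP : ι → Gp} {aM : ι → Gn}
    (haP : ∀ i, IsAlphaPlus S.toSetupPlus i (aP i))
    (hbP : ∀ i, IsBetaPlus S.toSetupPlus i (bP i))
    (haM : ∀ i, IsAlphaMinus S i (aM i)) {b c : ι}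
    (hg : aP b = aP c) (hx : aM b = aM c) : b = c := by
  obtain ⟨p, r, hp, hxp, hMc⟩ := rep_exists S haP haM (aP b) (aM b)
  have hprod := rep_product S haP haM hp hMc
  have hb := eq_of_rep S haP hbP haM hxp hMc hprod
  have hMc' := hMc
  have hprod' := hprod
  rw [hg] at hMc' hprod'
  have hxp' : aM p = aM c := hxp.trans hx
  have hc := eq_of_rep S haP hbP haM hxp' hMc' hprod'
  exact hb.trans hc.symm

/-- every basis element has a right quasi-inverse -/
lemma rightQI {aP bP : ι → Gp} {aM : ι → Gn}
    (haP : ∀ i, IsAlphaPlus S.toSetupPlus i (aP i))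
    (hbP : ∀ i, IsBetaPlus S.toSetupPlus i (bP i))
    (haM : ∀ i, IsAlphaMinus S i (aM i)) (b : ι) :
    ∃ r, Mc S b r (S.d (aP b)) ≠ 0 ∧
      S.B b * S.B r = Mc S b r (S.d (aP b)) • S.B (S.d (aP b)) := by
  obtain ⟨p, r, hp, hxp, hMc⟩ := rep_exists S haP haM (aP b) (aM b)
  have hprod := rep_product S haP haM hp hMc
  have hb := eq_of_rep S haP hbP haM hxp hMc hprod
  rw [← hb] at hMc hprod
  exact ⟨r, hMc, hprod⟩

/-- nonvanishing of compatible products -/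
lemma mul_ne_zero_of_match {aP bP : ι → Gp} {aM : ι → Gn}
    (haP : ∀ i, IsAlphaPlus S.toSetupPlus i (aP i))
    (hbP : ∀ i, IsBetaPlus S.toSetupPlus i (bP i))
    (haM : ∀ i, IsAlphaMinus S i (aM i)) {b b' : ι} (h : bP b = aP b') :
    S.B b * S.B b' ≠ 0 := by
  obtain ⟨r, hMc, hprod⟩ := rightQI S haP hbP haM b'
  intro h0
  have h1 : S.B b * (S.B b' * S.B r) = 0 := by rw [← mul_assoc, h0, zero_mul]
  rw [hprod, mul_smul_comm] at h1
  have h2 : S.B b * S.B (S.d (aP b')) = S.B b := by rw [← h, hbP b]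
  rw [h2] at h1
  rcases smul_eq_zero.mp h1 with h3 | h3
  · exact hMc h3
  · exact S.B.ne_zero b h3

lemma forward_dir {aP bP : ι → Gp} {aM : ι → Gn}
    (haP : ∀ i, IsAlphaPlus S.toSetupPlus i (aP i))
    (hbP : ∀ i, IsBetaPlus S.toSetupPlus i (bP i))
    (haM : ∀ i, IsAlphaMinus S i (aM i)) {b b' c : ι} {lam : ℝ} (hlam : 0 < lam)
    (h : S.B b * S.B b' = (lam : ℂ) • S.B c) :
    aP b = aP c ∧ bP b = aP b' ∧ aM b * aM b' = aM c := by
  have hMc : Mc S b b' c = (lam : ℂ) := by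
    rw [Mc, h, map_smul, Finsupp.smul_apply, repr_basis_self, smul_eq_mul, mul_one]
  have hMcne : Mc S b b' c ≠ 0 := by
    rw [hMc]
    exact_mod_cast ne_of_gt hlam
  refine ⟨(aP_mul_left S haP hMcne).symm, ?_, aM_mul S haM hMcne⟩
  by_contra hne
  have h0 := mul_eq_zero_of_ne S haP hbP hne
  rw [h, smul_eq_zero] at h0
  rcases h0 with h0 | h0
  · exact (by exact_mod_cast ne_of_gt hlam : (lam : ℂ) ≠ 0) h0
  · exact S.B.ne_zero c h0

lemma backward_dir {aP bP : ι → Gp} {aM : ι → Gn}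
    (haP : ∀ i, IsAlphaPlus S.toSetupPlus i (aP i))
    (hbP : ∀ i, IsBetaPlus S.toSetupPlus i (bP i))
    (haM : ∀ i, IsAlphaMinus S i (aM i)) {b b' c : ι}
    (h1 : aP b = aP c) (h2 : bP b = aP b') (h3 : aM b * aM b' = aM c) :
    ∃ lam : ℝ, 0 < lam ∧ S.B b * S.B b' = (lam : ℂ) • S.B c := by
  classical
  have hne := mul_ne_zero_of_match S haP hbP haM h2
  have hex : ∃ k, Mc S b b' k ≠ 0 := by
    by_contra hall
    push_neg at hall
    apply hne
    rw [mul_expand S b b']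
    exact Finset.sum_eq_zero fun k _ => by rw [hall k, zero_smul]
  obtain ⟨k, hk⟩ := hex
  have hkc : k = c := by
    refine elem_unique S haP hbP haM ?_ ?_
    · rw [aP_mul_left S haP hk, h1]
    · rw [← aM_mul S haM hk, h3]
  subst hkc
  have hprod : S.B b * S.B b' = Mc S b b' k • S.B k := by
    rw [mul_expand S b b']
    rw [Finset.sum_eq_single k]
    · intro t _ ht
      rcases eq_or_ne (Mc S b b' t) 0 with h0 | h0
      · rw [h0, zero_smul]
      · exfalso
        apply ht
        refine elem_unique S haP hbP haM ?_ ?_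
        · rw [aP_mul_left S haP h0, aP_mul_left S haP hk]
        · rw [← aM_mul S haM h0, ← aM_mul S haM hk]
    · simp
  have hpos : 0 < Mc S b b' k := lt_of_le_of_ne (Mc_nonneg S _ _ _) (Ne.symm hk)
  refine ⟨(Mc S b b' k).re, (Complex.lt_def.mp hpos).1, ?_⟩
  have hre : ((Mc S b b' k).re : ℂ) = Mc S b b' k := by
    have hle := Complex.le_def.mp (Mc_nonneg S b b' k)
    apply Complex.ext
    · simp
    · simp [← hle.2]
  rw [hprod, hre]



end LYZ

theorem stmt16 {H : Type} [Ring H] [HopfAlgebra ℂ H] {ι : Type} [Fintype ι]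
    {Gp : Type} [Group Gp] [Fintype Gp] {Gn : Type} [Group Gn] [Fintype Gn]
    (S : SetupFull H ι Gp Gn)
    -- the functions α₊, β₊, α₋ on basis elements
    (aP bP : ι → Gp) (aM : ι → Gn)
    (haP : ∀ i, IsAlphaPlus S.toSetupPlus i (aP i))
    (hbP : ∀ i, IsBetaPlus S.toSetupPlus i (bP i))
    (haM : ∀ i, IsAlphaMinus S i (aM i)) :
    -- bb' is a positive multiple of c iff α₊(b) = α₊(c), β₊(b) = α₊(b') and
    -- α₋(b)α₋(b') = α₋(c)
    (∀ b b' c : ι,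
      (∃ lam : ℝ, 0 < lam ∧ S.B b * S.B b' = (lam : ℂ) • S.B c) ↔
      (aP b = aP c ∧ bP b = aP b' ∧ aM b * aM b' = aM c)) ∧
    -- for fixed c, (b, b') ↦ α₋(b) is a bijection from such pairs onto G₋
    (∀ c : ι, Set.BijOn (fun p : ι × ι => aM p.1)
      {p : ι × ι | ∃ lam : ℝ, 0 < lam ∧ S.B p.1 * S.B p.2 = (lam : ℂ) • S.B c}
      Set.univ) := by
  constructor
  · intro b b' c
    constructor
    · rintro ⟨lam, hlam, h⟩
      exact LYZ.forward_dir S haP hbP haM hlam h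
    · rintro ⟨h1, h2, h3⟩
      exact LYZ.backward_dir S haP hbP haM h1 h2 h3
  · intro c
    refine ⟨fun p _ => Set.mem_univ _, ?_, ?_⟩
    · -- injectivity
      rintro ⟨b₁, b₁'⟩ h₁ ⟨b₂, b₂'⟩ h₂ heq
      simp only [Set.mem_setOf_eq] at h₁ h₂
      obtain ⟨l₁, hl₁, hp₁⟩ := h₁
      obtain ⟨l₂, hl₂, hp₂⟩ := h₂
      obtain ⟨ha₁, hb₁, hm₁⟩ := LYZ.forward_dir S haP hbP haM hl₁ hp₁
      obtain ⟨ha₂, hb₂, hm₂⟩ := LYZ.forward_dir S haP hbP haM hl₂ hp₂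
      have heq' : aM b₁ = aM b₂ := heq
      have hb : b₁ = b₂ :=
        LYZ.elem_unique S haP hbP haM (ha₁.trans ha₂.symm) heq'
      have hb' : b₁' = b₂' := by
        apply LYZ.elem_unique S haP hbP haM
        · rw [← hb₁, ← hb₂, hb]
        · have e1 : aM b₁' = (aM b₁)⁻¹ * aM c := by rw [← hm₁]; group
          have e2 : aM b₂' = (aM b₂)⁻¹ * aM c := by rw [← hm₂]; group
          rw [e1, e2, hb]
      exact Prod.ext hb hb'
    · -- surjectivity
      intro x _
      obtain ⟨b, rb, hbPv, hbMv, _⟩ := LYZ.rep_exists S haP haM (aP c) x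
      obtain ⟨b', rb', hb'Pv, hb'Mv, _⟩ :=
        LYZ.rep_exists S haP haM (bP b) (x⁻¹ * aM c)
      obtain ⟨lam, hlam, hprod⟩ := LYZ.backward_dir S haP hbP haM (b := b) (b' := b')
        (c := c) hbPv hb'Pv.symm
        (by rw [hbMv, hb'Mv, ← mul_assoc, mul_inv_cancel, one_mul])
      exact ⟨(b, b'), ⟨lam, hlam, hprod⟩, hbMv⟩
end

section
/- Let M be a finite 𝐁-module with basis B, and let b ∈ B. Then: (1) if the b-coordinate of x ∈ M (with respect to B) is 1, then for every y ∈ M the b-coordinate of x + y is also 1; (2) if b = x₁ + ⋯ + x_k for some x₁, …, x_k ∈ M, then each x_i equals b or 0; (3) the basis of M is unique: B is the only basis of M. -/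
/-!
Write `x ≤ y` for `x + y = y`. If a basis element `b` satisfies `b ≤ z`, then `b` occurs in the
expansion of `z`: otherwise adding `b` to that expansion would give a second one. Consequently
everything below `b` expands into a subset of `{b}`, i.e. equals `0` or `b`; this gives (1) and
(2). For (3), each element `c` of one basis expands in another basis into elements below `c`,
none of them `0`, so the expansion is `{c}` and `c` lies in the other basis.
-/

/-- A module over the Boolean semiring `𝐁 = {0,1}` (with `1 + 1 = 1`) is the same
thing as a commutative additive monoid in which addition is idempotent. -/
def IsBoolModule (M : Type*) [AddCommMonoid M] : Prop :=
  ∀ x : M, x + x = x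

/-- `B` is a basis of the `𝐁`-module `M`: every element of `M` is a unique
`𝐁`-linear combination (i.e. a unique sum of a subset) of elements of `B`. -/
def IsBoolBasis {M : Type*} [AddCommMonoid M] (B : Finset M) : Prop :=
  ∀ x : M, ∃! s : Finset M, s ⊆ B ∧ x = ∑ b ∈ s, b

section

variable {M : Type*} [AddCommMonoid M]

theorem IsBoolModule.add_sum_of_mem (hM : IsBoolModule M) {ι : Type*} {s : Finset ι}
    {g : ι → M} {i : ι} (hi : i ∈ s) : g i + ∑ j ∈ s, g j = ∑ j ∈ s, g j := by
  classical
  rw [← Finset.add_sum_erase s g hi, ← add_assoc, hM]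

namespace IsBoolBasis

variable {B : Finset M}

theorem zero_notMem (hB : IsBoolBasis B) : (0 : M) ∉ B := by
  intro h0
  have hempty : (∅ : Finset M) ⊆ B ∧ (0 : M) = ∑ c ∈ ∅, c := by simp
  have hsingleton : ({0} : Finset M) ⊆ B ∧ (0 : M) = ∑ c ∈ {0}, c := by simp [h0]
  exact Finset.singleton_ne_empty 0 ((hB 0).unique hsingleton hempty)

theorem mem_of_add_eq (hB : IsBoolBasis B) {b z : M} (hb : b ∈ B) (hbz : b + z = z)
    {t : Finset M} (ht : t ⊆ B) (hzt : z = ∑ c ∈ t, c) : b ∈ t := by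
  classical
  by_contra hbt
  have hinsert : insert b t ⊆ B ∧ z = ∑ c ∈ insert b t, c := by
    refine ⟨Finset.insert_subset hb ht, ?_⟩
    rw [Finset.sum_insert hbt, ← hzt, hbz]
  have ht_eq : t = insert b t := (hB z).unique ⟨ht, hzt⟩ hinsert
  exact hbt (ht_eq ▸ Finset.mem_insert_self b t)

theorem eq_or_eq_zero_of_add_eq (hM : IsBoolModule M) (hB : IsBoolBasis B) {b x : M}
    (hb : b ∈ B) (hxb : x + b = b) : x = b ∨ x = 0 := by
  obtain ⟨t, ⟨ht, hx⟩, -⟩ := hB x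
  have hsub : t ⊆ {b} := by
    intro c hc
    have hcx : c + x = x := by
      rw [hx]; exact hM.add_sum_of_mem (g := id) hc
    have hcb : c + b = b := by rw [← hxb, ← add_assoc, hcx]
    exact hB.mem_of_add_eq (ht hc) hcb (Finset.singleton_subset_iff.mpr hb) (by simp)
  rcases Finset.subset_singleton_iff.mp hsub with rfl | rfl
  · right; simpa using hx
  · left; simpa using hx

theorem subset (hM : IsBoolModule M) {C : Finset M} (hB : IsBoolBasis B) (hC : IsBoolBasis C) :
    B ⊆ C := by
  intro c hc
  obtain ⟨t, ⟨ht, hct⟩, -⟩ := hC c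
  have hsub : t ⊆ {c} := by
    intro d hd
    have hdc : d + c = c := by rw [hct]; exact hM.add_sum_of_mem (g := id) hd
    rcases hB.eq_or_eq_zero_of_add_eq hM hc hdc with rfl | rfl
    · exact Finset.mem_singleton_self d
    · exact absurd (ht hd) hC.zero_notMem
  rcases Finset.subset_singleton_iff.mp hsub with rfl | rfl
  · have hc0 : c = 0 := by simpa using hct
    exact absurd (hc0 ▸ hc) hB.zero_notMem
  · exact ht (Finset.mem_singleton_self c)

end IsBoolBasis

end

theorem stmt18_general {M : Type*} [AddCommMonoid M]
    (hM : IsBoolModule M) (B : Finset M) (hB : IsBoolBasis B) (b : M) (hb : b ∈ B) :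
    -- (1) if the b-coordinate of x is 1, then the b-coordinate of x + y is also 1
    (∀ (x y : M) (s t : Finset M), s ⊆ B → x = ∑ c ∈ s, c → b ∈ s →
      t ⊆ B → x + y = ∑ c ∈ t, c → b ∈ t) ∧
    -- (2) if b = x₁ + ⋯ + x_k then each xᵢ equals b or 0
    (∀ (k : ℕ) (f : Fin k → M), b = ∑ i : Fin k, f i →
      ∀ i : Fin k, f i = b ∨ f i = 0) ∧
    -- (3) the basis of M is unique
    (∀ B' : Finset M, IsBoolBasis B' → B' = B) := by
  refine ⟨?_, ?_, ?_⟩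
  · intro x y s t _ hx hbs ht hxy
    have hbx : b + x = x := by rw [hx]; exact hM.add_sum_of_mem (g := id) hbs
    exact hB.mem_of_add_eq hb (by rw [← add_assoc, hbx]) ht hxy
  · intro k f hbf i
    refine hB.eq_or_eq_zero_of_add_eq hM hb ?_
    rw [hbf]; exact hM.add_sum_of_mem (Finset.mem_univ i)
  · intro B' hB'
    exact (hB'.subset hM hB).antisymm (hB.subset hM hB')

theorem stmt18 {M : Type*} [AddCommMonoid M] [Fintype M] [DecidableEq M]
    (hM : IsBoolModule M) (B : Finset M) (hB : IsBoolBasis B) (b : M) (hb : b ∈ B) :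
    -- (1) if the b-coordinate of x is 1, then the b-coordinate of x + y is also 1
    (∀ (x y : M) (s t : Finset M), s ⊆ B → x = ∑ c ∈ s, c → b ∈ s →
      t ⊆ B → x + y = ∑ c ∈ t, c → b ∈ t) ∧
    -- (2) if b = x₁ + ⋯ + x_k then each xᵢ equals b or 0
    (∀ (k : ℕ) (f : Fin k → M), b = ∑ i : Fin k, f i →
      ∀ i : Fin k, f i = b ∨ f i = 0) ∧
    -- (3) the basis of M is unique
    (∀ B' : Finset M, IsBoolBasis B' → B' = B) :=
  stmt18_general hM B hB b hb
end
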